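/- arXiv:1611.04132 — 2 statements merged into one kernel-verified Lean document; each statement's English description precedes it below -/
import Mathlib

section
/- Let K be a convex body in R^n and φ : K → (0,∞) continuous. For ε ∈ (0, min_{∂K} φ), set α = min_{∂K} φ − ε and β = max_{∂K} φ + ε. Then there exists δ₀ > 0 such that for all δ ∈ (0, δ₀), the weighted floating body satisfies K_{δ/α} ⊆ K_δ^φ ⊆ K_{δ/β}, where K_t denotes the ordinary (Lebesgue) convex floating body with parameter t. -/
open MeasureTheory Metric Set
open scoped RealInnerProductSpace ENNReal Topology

noncomputable section

/-- Euclidean space `ℝⁿ`. -/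
abbrev Euc (n : ℕ) := EuclideanSpace ℝ (Fin n)

/-- The weighted floating body `K_δ^φ`: the intersection of all closed half-spaces `H⁻`
whose complementary half-space `H⁺` cuts off `φ`-weighted measure at most `δ` from `K`.
Taking `φ ≡ 1` gives the ordinary (Lebesgue) convex floating body. -/
noncomputable def wfloat {n : ℕ} (K : Set (Euc n)) (φ : Euc n → ℝ) (δ : ℝ) : Set (Euc n) :=
  ⋂ v ∈ sphere (0 : Euc n) 1,
    ⋂ t ∈ {t : ℝ | (∫ y in K ∩ {y : Euc n | t ≤ ⟪v, y⟫}, φ y) ≤ δ},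
      {y : Euc n | ⟪v, y⟫ ≤ t}

/-! A cap of volume less than that of a ball of radius `η/2` contains no point `x` with
`ball x η ⊆ K`: otherwise the ball of radius `η/2` inside `ball x η`, tangent at `x` to the
cutting hyperplane, would lie in the cap. So small caps lie within `η` of `∂K`, where by uniform
continuity `α ≤ φ ≤ β`. For small `δ` every cap that matters for either floating body is small
(for `K_δ^φ` because `φ` is bounded below by a positive constant on `K`), and comparing
`∫_cap φ` with `α · vol cap` and `β · vol cap` gives both inclusions. -/

section Caps

variable {E : Type*} [NormedAddCommGroup E] [InnerProductSpace ℝ E]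

def cap (K : Set E) (v : E) (t : ℝ) : Set E := K ∩ {y | t ≤ ⟪v, y⟫}

theorem measurableSet_cap [MeasurableSpace E] [OpensMeasurableSpace E] {K : Set E}
    (hK : MeasurableSet K) (v : E) (t : ℝ) : MeasurableSet (cap K v t) :=
  hK.inter (isClosed_le continuous_const (continuous_const.inner continuous_id)).measurableSet

theorem IsCompact.measure_cap_ne_top [MeasurableSpace E] {μ : Measure E}
    [IsFiniteMeasureOnCompacts μ] {K : Set E} (hK : IsCompact K) (v : E) (t : ℝ) :
    μ (cap K v t) ≠ ∞ :=
  ((measure_mono inter_subset_left).trans_lt hK.measure_lt_top).ne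

theorem ball_add_smul_subset_halfspace {v x : E} (hv : ‖v‖ = 1) {t : ℝ} (hxt : t ≤ ⟪v, x⟫)
    (r : ℝ) : ball (x + r • v) r ⊆ {y | t ≤ ⟪v, y⟫} := by
  intro y hy
  have hdev : -r ≤ ⟪v, y - (x + r • v)⟫ := by
    have := (abs_real_inner_le_norm v (y - (x + r • v))).trans_lt
      (by simpa [hv, dist_eq_norm] using hy)
    linarith [neg_abs_le ⟪v, y - (x + r • v)⟫]
  have hsplit : ⟪v, y⟫ = ⟪v, x⟫ + r + ⟪v, y - (x + r • v)⟫ := by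
    rw [← add_sub_cancel (x + r • v) y, inner_add_right, inner_add_right, real_inner_smul_right,
      real_inner_self_eq_norm_sq, hv]
    simp
  show t ≤ ⟪v, y⟫
  linarith

variable [FiniteDimensional ℝ E] [MeasurableSpace E] [BorelSpace E] (μ : Measure E)
  [μ.IsAddHaarMeasure]

theorem exists_mem_frontier_dist_lt_of_measure_cap_lt {K : Set E} {v : E} (hv : ‖v‖ = 1)
    {t r : ℝ} (hcap : μ (cap K v t) < μ (ball 0 r)) {x : E} (hx : x ∈ cap K v t) :
    ∃ w ∈ frontier K, dist x w < 2 * r := by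
  have hr : 0 < r := by
    by_contra! h
    simp [ball_eq_empty.2 h] at hcap
  have hnot : ¬ ball x (2 * r) ⊆ K := by
    intro hball
    have hsub : ball (x + r • v) r ⊆ cap K v t := by
      refine subset_inter (Subset.trans (ball_subset_ball' ?_) hball)
        (ball_add_smul_subset_halfspace hv hx.2 r)
      simp [norm_smul, hv, abs_of_pos hr]
      linarith
    have := (measure_mono hsub).trans_lt hcap
    rw [Measure.addHaar_ball_center] at this
    exact this.false
  obtain ⟨z, hz, hzK⟩ := not_subset.1 hnot
  obtain ⟨w, hw, hxw⟩ :=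
    exists_mem_frontier_infDist_compl_eq_dist hx.1 (ne_univ_iff_exists_notMem K |>.2 ⟨z, hzK⟩)
  exact ⟨w, hw, hxw ▸ (infDist_le_dist_of_mem hzK).trans_lt (mem_ball'.1 hz)⟩

theorem IsCompact.exists_forall_small_cap_exists_frontier_abs_sub_lt {K : Set E}
    (hK : IsCompact K) {φ : E → ℝ} (hφ : ContinuousOn φ K) {ε : ℝ} (hε : 0 < ε) :
    ∃ V > 0, ∀ v : E, ‖v‖ = 1 → ∀ t : ℝ, μ.real (cap K v t) < V →
      ∀ x ∈ cap K v t, ∃ w ∈ frontier K, |φ x - φ w| < ε := by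
  obtain ⟨η, hη, hφη⟩ :=
    Metric.uniformContinuousOn_iff.1 (hK.uniformContinuousOn_of_continuous hφ) ε hε
  refine ⟨μ.real (ball 0 (η / 2)), ENNReal.toReal_pos (measure_ball_pos μ 0 (by positivity)).ne'
    measure_ball_lt_top.ne, fun v hv t hcap x hx => ?_⟩
  have hcap' : μ (cap K v t) < μ (ball 0 (η / 2)) :=
    (ENNReal.toReal_lt_toReal (hK.measure_cap_ne_top v t) measure_ball_lt_top.ne).1 hcap
  obtain ⟨w, hw, hxw⟩ := exists_mem_frontier_dist_lt_of_measure_cap_lt μ hv hcap' hx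
  refine ⟨w, hw, ?_⟩
  rw [← Real.dist_eq]
  exact hφη x hx.1 w (hK.isClosed.frontier_subset hw) (by linarith)

theorem IsCompact.exists_forall_small_cap_mem_Icc {K : Set E} (hK : IsCompact K) {φ : E → ℝ}
    (hφ : ContinuousOn φ K) {ε : ℝ} (hε : 0 < ε) :
    ∃ V > 0, ∀ v : E, ‖v‖ = 1 → ∀ t : ℝ, μ.real (cap K v t) < V → ∀ x ∈ cap K v t,
      φ x ∈ Icc (sInf (φ '' frontier K) - ε) (sSup (φ '' frontier K) + ε) := by
  obtain ⟨V, hV, hnear⟩ := hK.exists_forall_small_cap_exists_frontier_abs_sub_lt μ hφ hε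
  have himg : IsCompact (φ '' frontier K) :=
    (hK.of_isClosed_subset isClosed_frontier hK.isClosed.frontier_subset).image_of_continuousOn
      (hφ.mono hK.isClosed.frontier_subset)
  refine ⟨V, hV, fun v hv t hvol x hx => ?_⟩
  obtain ⟨w, hw, hxw⟩ := hnear v hv t hvol x hx
  have := csInf_le himg.bddBelow (mem_image_of_mem φ hw)
  have := le_csSup himg.bddAbove (mem_image_of_mem φ hw)
  constructor <;> linarith [abs_lt.1 hxw]

end Caps

section SetIntegral

variable {X : Type*} [MeasurableSpace X] {μ : Measure X} {s : Set X} {f : X → ℝ} {c δ : ℝ}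

theorem measureReal_le_div_of_le_setIntegral (hs : MeasurableSet s) (hμs : μ s ≠ ∞)
    (hf : IntegrableOn f s μ) (hc : 0 < c) (hcf : ∀ x ∈ s, c ≤ f x)
    (hδ : ∫ x in s, f x ∂μ ≤ δ) : μ.real s ≤ δ / c := by
  rw [le_div_iff₀' hc]
  exact (setIntegral_ge_of_const_le_real hs hμs hcf hf).trans hδ

theorem setIntegral_le_of_le_of_measureReal_le_div (hs : MeasurableSet s) (hμs : μ s ≠ ∞)
    (hf : IntegrableOn f s μ) (hc : 0 < c) (hfc : ∀ x ∈ s, f x ≤ c)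
    (hμδ : μ.real s ≤ δ / c) : ∫ x in s, f x ∂μ ≤ δ :=
  calc ∫ x in s, f x ∂μ ≤ ∫ _ in s, c ∂μ :=
        setIntegral_mono_on hf (integrableOn_const hμs) hs hfc
    _ = μ.real s * c := by rw [setIntegral_const, smul_eq_mul]
    _ ≤ δ := (le_div_iff₀ hc).1 hμδ

end SetIntegral

theorem wfloat_subset_wfloat {n : ℕ} {K : Set (Euc n)} {φ ψ : Euc n → ℝ} {δ δ' : ℝ}
    (h : ∀ v ∈ sphere (0 : Euc n) 1, ∀ t,
      ∫ y in cap K v t, ψ y ≤ δ' → ∫ y in cap K v t, φ y ≤ δ) :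
    wfloat K φ δ ⊆ wfloat K ψ δ' := fun _ hx =>
  mem_iInter₂.2 fun v hv => mem_iInter₂.2 fun t ht =>
    mem_iInter₂.1 (mem_iInter₂.1 hx v hv) t (h v hv t ht)

section FloatingBody

variable {n : ℕ} {K : Set (Euc n)} {φ : Euc n → ℝ} {V δ : ℝ}

theorem wfloat_one_div_subset_wfloat (hK : IsCompact K) (hφ : ContinuousOn φ K) {a c : ℝ}
    (ha : 0 < a) (hc : 0 < c) (hcφ : ∀ x ∈ K, c ≤ φ x)
    (haφ : ∀ v : Euc n, ‖v‖ = 1 → ∀ t, volume.real (cap K v t) < V → ∀ x ∈ cap K v t, a ≤ φ x)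
    (hδ : δ < c * V) : wfloat K (fun _ => 1) (δ / a) ⊆ wfloat K φ δ := by
  refine wfloat_subset_wfloat fun v hv t ht => ?_
  have hmeas := measurableSet_cap hK.isClosed.measurableSet v t
  have hint : IntegrableOn φ (cap K v t) :=
    (hφ.integrableOn_compact hK).mono_set inter_subset_left
  have hsmall : volume.real (cap K v t) < V :=
    (measureReal_le_div_of_le_setIntegral hmeas (hK.measure_cap_ne_top v t) hint hc
      (fun x hx => hcφ x hx.1) ht).trans_lt ((div_lt_iff₀' hc).2 hδ)
  simpa using measureReal_le_div_of_le_setIntegral hmeas (hK.measure_cap_ne_top v t) hint ha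
    (haφ v (mem_sphere_zero_iff_norm.1 hv) t hsmall) ht

theorem wfloat_subset_wfloat_one_div (hK : IsCompact K) (hφ : ContinuousOn φ K) {b : ℝ}
    (hb : 0 < b)
    (hφb : ∀ v : Euc n, ‖v‖ = 1 → ∀ t, volume.real (cap K v t) < V → ∀ x ∈ cap K v t, φ x ≤ b)
    (hδ : δ < b * V) : wfloat K φ δ ⊆ wfloat K (fun _ => 1) (δ / b) := by
  refine wfloat_subset_wfloat fun v hv t ht => ?_
  have hvol : volume.real (cap K v t) ≤ δ / b := by simpa using ht
  exact setIntegral_le_of_le_of_measureReal_le_div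
    (measurableSet_cap hK.isClosed.measurableSet v t) (hK.measure_cap_ne_top v t)
    ((hφ.integrableOn_compact hK).mono_set inter_subset_left) hb
    (hφb v (mem_sphere_zero_iff_norm.1 hv) t (hvol.trans_lt ((div_lt_iff₀' hb).2 hδ))) hvol

end FloatingBody

theorem weighted_floating_body_sandwich_general {n : ℕ} (K : Set (Euc n))
    (hKcomp : IsCompact K)
    (φ : Euc n → ℝ) (hφcont : ContinuousOn φ K) (hφpos : ∀ x ∈ K, 0 < φ x)
    (ε : ℝ) (hε : 0 < ε) (hε' : ε < sInf (φ '' frontier K)) :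
    ∃ δ₀ > 0, ∀ δ ∈ Ioo (0 : ℝ) δ₀,
      wfloat K (fun _ => 1) (δ / (sInf (φ '' frontier K) - ε)) ⊆ wfloat K φ δ ∧
      wfloat K φ δ ⊆ wfloat K (fun _ => 1) (δ / (sSup (φ '' frontier K) + ε)) := by
  have hfr : (frontier K).Nonempty := by
    by_contra! h
    rw [h, image_empty, Real.sInf_empty] at hε'
    linarith
  obtain ⟨x₀, hx₀, hmin⟩ :=
    hKcomp.exists_isMinOn (hfr.mono hKcomp.isClosed.frontier_subset) hφcont
  obtain ⟨V, hV, hbounds⟩ := hKcomp.exists_forall_small_cap_mem_Icc volume hφcont hε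
  have hβ : 0 < sSup (φ '' frontier K) + ε := by
    have := Real.sSup_nonneg (s := φ '' frontier K) <| forall_mem_image.2 fun x hx =>
      (hφpos x (hKcomp.isClosed.frontier_subset hx)).le
    linarith
  refine ⟨min (φ x₀) (sSup (φ '' frontier K) + ε) * V, mul_pos (lt_min (hφpos x₀ hx₀) hβ) hV,
    fun δ hδ => ⟨?_, ?_⟩⟩
  · exact wfloat_one_div_subset_wfloat hKcomp hφcont (by linarith) (hφpos x₀ hx₀)
      (fun x hx => hmin hx) (fun v hv t hvol x hx => (hbounds v hv t hvol x hx).1)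
      (hδ.2.trans_le (by gcongr; exact min_le_left _ _))
  · exact wfloat_subset_wfloat_one_div hKcomp hφcont hβ
      (fun v hv t hvol x hx => (hbounds v hv t hvol x hx).2)
      (hδ.2.trans_le (by gcongr; exact min_le_right _ _))

/-- Sandwiching the weighted floating body between ordinary
floating bodies: with `α = min_{∂K} φ − ε`, `β = max_{∂K} φ + ε`, there is `δ₀ > 0`
such that `K_{δ/α} ⊆ K_δ^φ ⊆ K_{δ/β}` for all `δ ∈ (0, δ₀)`. -/
theorem weighted_floating_body_sandwich {n : ℕ} (K : Set (Euc n))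
    (hKcomp : IsCompact K) (hKconv : Convex ℝ K) (hKint : (interior K).Nonempty)
    (φ : Euc n → ℝ) (hφcont : ContinuousOn φ K) (hφpos : ∀ x ∈ K, 0 < φ x)
    (ε : ℝ) (hε : 0 < ε) (hε' : ε < sInf (φ '' frontier K)) :
    ∃ δ₀ > 0, ∀ δ ∈ Ioo (0 : ℝ) δ₀,
      wfloat K (fun _ => 1) (δ / (sInf (φ '' frontier K) - ε)) ⊆ wfloat K φ δ ∧
      wfloat K φ δ ⊆ wfloat K (fun _ => 1) (δ / (sSup (φ '' frontier K) + ε)) :=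
  weighted_floating_body_sandwich_general K hKcomp φ hφcont hφpos ε hε hε'
end
end

section
/- Let K be a convex body in R^n and φ : K → (0,∞) continuous. For v ∈ S^{n−1} and δ > 0 define t_δ(v) implicitly by Φ(K ∩ H⁺(v, t_δ(v))) = δ, where H⁺(v,t) = {y : y·v ≥ t} and Φ(A) = ∫_A φ. Then there exists δ₀ > 0 such that (δ,v) ↦ t_δ(v) is continuous on [0,δ₀) × S^{n−1} with t₀(v) = h_K(v), and the weighted floating body satisfies K_δ^φ = ⋂_{v ∈ S^{n−1}} H⁻(v, t_δ(v)). -/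
/-!
For a fixed direction `v`, the cap mass `s ↦ Φ(K ∩ H⁺(v, s))` is continuous, since hyperplanes are
null; it equals `Φ(K)` up to `min_K ⟪v, ·⟫`, vanishes from `h_K(v)` on, and is strictly decreasing
in between, because every slab of `K` between these two levels contains an open piece of `int K`,
where `φ > 0`. Hence for `0 ≤ δ < δ₀ := Φ(K)` the set `{s | Φ(K ∩ H⁺(v, s)) ≤ δ}` is a closed
half-line whose endpoint `t_δ(v)` has cap mass exactly `δ`, and `t_0(v) = h_K(v)`. The cap mass is
jointly continuous in `(v, s)`, and strict monotonicity then prevents `t` from jumping; at `δ = 0`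
continuity of `h_K` takes over. In the definition of `K_δ^φ`, the half-spaces for a direction `v`
are all implied by the one at the least admissible level `t_δ(v)`.
-/

open MeasureTheory Metric Set
open scoped RealInnerProductSpace ENNReal Topology

noncomputable section

/-- The support function `h_K(v) = max {v·x : x ∈ K}`. -/
noncomputable def suppFn {n : ℕ} (K : Set (Euc n)) (v : Euc n) : ℝ :=
  sSup ((fun x => ⟪v, x⟫) '' K)

open Filter

section MassProfile

/-- The shape of a cap mass `s ↦ Φ(K ∩ H⁺(v, s))`, with `lo = min_K ⟪v, ·⟫` and `hi = h_K(v)`. -/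
structure IsMassProfile (g : ℝ → ℝ) (lo hi M : ℝ) : Prop where
  continuous : Continuous g
  antitone : Antitone g
  strictAntiOn : StrictAntiOn g (Icc lo hi)
  eq_of_le_lo : ∀ s ≤ lo, g s = M
  apply_hi : g hi = 0

namespace IsMassProfile

variable {g : ℝ → ℝ} {lo hi M δ : ℝ}

theorem lo_le_of_apply_le (hg : IsMassProfile g lo hi M) (hδ : δ < M) {s : ℝ}
    (hs : g s ≤ δ) : lo ≤ s := by
  by_contra! h
  linarith [hg.eq_of_le_lo s h.le]

theorem isLeast_sInf (hg : IsMassProfile g lo hi M) (hδ₀ : 0 ≤ δ) (hδ : δ < M) :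
    IsLeast {s | g s ≤ δ} (sInf {s | g s ≤ δ}) :=
  (isClosed_le hg.continuous continuous_const).isLeast_csInf
    ⟨hi, by simpa [hg.apply_hi] using hδ₀⟩ ⟨lo, fun _ hs => hg.lo_le_of_apply_le hδ hs⟩

theorem sInf_mem_Icc (hg : IsMassProfile g lo hi M) (hδ₀ : 0 ≤ δ) (hδ : δ < M) :
    sInf {s | g s ≤ δ} ∈ Icc lo hi :=
  ⟨hg.lo_le_of_apply_le hδ (hg.isLeast_sInf hδ₀ hδ).1,
    (hg.isLeast_sInf hδ₀ hδ).2 (by simpa [hg.apply_hi] using hδ₀)⟩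

theorem apply_sInf (hg : IsMassProfile g lo hi M) (hδ₀ : 0 ≤ δ) (hδ : δ < M) :
    g (sInf {s | g s ≤ δ}) = δ := by
  have hleast := hg.isLeast_sInf hδ₀ hδ
  have hlim : Tendsto g (𝓝[<] sInf {s | g s ≤ δ}) (𝓝 (g (sInf {s | g s ≤ δ}))) :=
    hg.continuous.continuousAt.tendsto.mono_left nhdsWithin_le_nhds
  refine le_antisymm hleast.1 (ge_of_tendsto hlim (eventually_nhdsWithin_of_forall fun s hs => ?_))
  exact (lt_of_not_ge fun h => (not_le.2 hs) (hleast.2 h)).le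

theorem le_sInf_of_lt_apply (hg : IsMassProfile g lo hi M) (hδ₀ : 0 ≤ δ) (hδ : δ < M)
    {s : ℝ} (hs : δ < g s) : s ≤ sInf {s | g s ≤ δ} := by
  by_contra! h
  linarith [hg.antitone h.le, hg.apply_sInf hδ₀ hδ]

theorem apply_lt_of_sInf_lt (hg : IsMassProfile g lo hi M) (hδ₀ : 0 ≤ δ) (hδ : δ < M)
    {s : ℝ} (hs : sInf {s | g s ≤ δ} < s) (hshi : s ≤ hi) : g s < δ := by
  have hmem := hg.sInf_mem_Icc hδ₀ hδ
  rw [← hg.apply_sInf hδ₀ hδ]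
  exact hg.strictAntiOn hmem ⟨hmem.1.trans hs.le, hshi⟩ hs

theorem sInf_nonpos_eq (hg : IsMassProfile g lo hi M) (hM : 0 < M) :
    sInf {s | g s ≤ 0} = hi := by
  refine le_antisymm ((hg.sInf_mem_Icc le_rfl hM).2) (not_lt.1 fun h => ?_)
  linarith [hg.apply_lt_of_sInf_lt le_rfl hM h le_rfl, hg.apply_hi]

end IsMassProfile

theorem continuousOn_sInf_sublevel {X : Type*} [TopologicalSpace X] {S : Set X}
    {f : X → ℝ → ℝ} {lo hi : X → ℝ} {M : ℝ}
    (hf : ContinuousOn (fun p : X × ℝ => f p.1 p.2) (S ×ˢ univ))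
    (hprof : ∀ x ∈ S, IsMassProfile (f x) (lo x) (hi x) M) (hhi : ContinuousOn hi S) :
    ContinuousOn (fun p : ℝ × X => sInf {s | f p.2 s ≤ p.1}) (Ico 0 M ×ˢ S) := by
  rintro ⟨δ₁, x₁⟩ ⟨⟨hδ₁₀ : 0 ≤ δ₁, hδ₁M : δ₁ < M⟩, hx₁ : x₁ ∈ S⟩
  have hf_at (s : ℝ) : ContinuousWithinAt (fun p : ℝ × X => f p.2 s - p.1)
      (Ico 0 M ×ˢ S) (δ₁, x₁) :=
    ((hf.comp (continuous_snd.prodMk continuous_const).continuousOn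
      (fun p (hp : p ∈ Ico 0 M ×ˢ S) => ⟨hp.2, mem_univ s⟩)) _
      ⟨⟨hδ₁₀, hδ₁M⟩, hx₁⟩).sub continuousWithinAt_fst
  have hprof₁ := hprof x₁ hx₁
  set t₁ := sInf {s | f x₁ s ≤ δ₁}
  refine tendsto_order.2 ⟨fun a (ha : a < t₁) => ?_, fun b (hb : t₁ < b) => ?_⟩
  · obtain ⟨s, has, hst⟩ := exists_between ha
    have hs : δ₁ < f x₁ s :=
      lt_of_not_ge fun h => by linarith [(hprof₁.isLeast_sInf hδ₁₀ hδ₁M).2 h]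
    filter_upwards [(hf_at s).eventually (eventually_gt_nhds (sub_pos.2 hs)),
      self_mem_nhdsWithin] with p hp ⟨⟨hp₀, hpM⟩, hpS⟩
    linarith [(hprof p.2 hpS).le_sInf_of_lt_apply hp₀ hpM (sub_pos.1 hp)]
  · -- at `δ₁ = 0` there is no strict drop to the right of `t₁ = hi x₁`: continuity of `hi` is used
    by_cases hhib : hi x₁ < b
    · filter_upwards [((hhi x₁ hx₁).comp continuousWithinAt_snd fun p hp => hp.2).eventually
        (eventually_lt_nhds hhib), self_mem_nhdsWithin] with p hp ⟨⟨hp₀, hpM⟩, hpS⟩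
      exact ((hprof p.2 hpS).sInf_mem_Icc hp₀ hpM).2.trans_lt hp
    · obtain ⟨s, hts, hsb⟩ := exists_between hb
      have hs : f x₁ s < δ₁ :=
        hprof₁.apply_lt_of_sInf_lt hδ₁₀ hδ₁M hts (hsb.le.trans (not_lt.1 hhib))
      filter_upwards [(hf_at s).eventually (eventually_lt_nhds (sub_neg.2 hs)),
        self_mem_nhdsWithin] with p hp ⟨⟨hp₀, hpM⟩, hpS⟩
      have hle : sInf {s | f p.2 s ≤ p.1} ≤ s :=
        ((hprof p.2 hpS).isLeast_sInf hp₀ hpM).2 (sub_neg.1 hp).le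
      linarith

end MassProfile

theorem IsLeast.biInter_setOf_le {α β : Type*} [Preorder β] {T : Set β} {t : β}
    (ht : IsLeast T t) (g : α → β) : ⋂ t' ∈ T, {y | g y ≤ t'} = {y | g y ≤ t} := by
  ext y
  simp only [mem_iInter]
  exact ⟨fun h => h t ht.1, fun h t' ht' => h.trans (ht.2 ht')⟩

theorem setIntegral_pos_of_isOpen_subset {X : Type*} [TopologicalSpace X] [MeasurableSpace X]
    {μ : Measure X} [μ.IsOpenPosMeasure] {s U : Set X} {f : X → ℝ} (hs : MeasurableSet s)
    (hf : IntegrableOn f s μ) (hpos : ∀ x ∈ s, 0 < f x) (hU : IsOpen U) (hUne : U.Nonempty)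
    (hUs : U ⊆ s) : 0 < ∫ x in s, f x ∂μ := by
  rw [setIntegral_pos_iff_support_of_nonneg_ae
    ((ae_restrict_mem hs).mono fun x hx => (hpos x hx).le) hf]
  exact (hU.measure_pos μ hUne).trans_le
    (measure_mono fun x hx => ⟨(hpos x (hUs hx)).ne', hUs hx⟩)

section CapMass

variable {E : Type*} [NormedAddCommGroup E] [InnerProductSpace ℝ E] {K : Set E}

theorem Convex.exists_mem_interior_inner_mem_Ioo (hK : Convex ℝ K)
    (hKi : (interior K).Nonempty) {v y₁ y₂ : E} {a b : ℝ} (hy₁ : y₁ ∈ K) (hy₂ : y₂ ∈ K)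
    (ha : a < ⟪v, y₁⟫) (hb : ⟪v, y₂⟫ < b) (hab : a < b) :
    ∃ x ∈ interior K, ⟪v, x⟫ ∈ Ioo a b := by
  have hcont : Continuous fun y : E => ⟪v, y⟫ := continuous_const.inner continuous_id
  have hdense : K ⊆ closure (interior K) := by
    rw [hK.closure_interior_eq_closure_of_nonempty_interior hKi]
    exact subset_closure
  obtain ⟨x₁, hx₁a, hx₁⟩ := mem_closure_iff_nhds.1 (hdense hy₁) _
    ((isOpen_lt continuous_const hcont).mem_nhds ha)
  obtain ⟨x₂, hx₂b, hx₂⟩ := mem_closure_iff_nhds.1 (hdense hy₂) _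
    ((isOpen_lt hcont continuous_const).mem_nhds hb)
  by_cases hx₁b : ⟪v, x₁⟫ < b
  · exact ⟨x₁, hx₁, hx₁a, hx₁b⟩
  by_cases hx₂a : a < ⟪v, x₂⟫
  · exact ⟨x₂, hx₂, hx₂a, hx₂b⟩
  obtain ⟨x, hx, hxv⟩ := (hK.interior.isPreconnected.image _ hcont.continuousOn).Icc_subset
    (mem_image_of_mem _ hx₂) (mem_image_of_mem _ hx₁)
    (show (a + b) / 2 ∈ Icc ⟪v, x₂⟫ ⟪v, x₁⟫ from ⟨by linarith, by linarith⟩)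
  exact ⟨x, hx, by simp only at hxv; rw [hxv]; constructor <;> linarith⟩

variable [MeasurableSpace E] {μ : Measure E} {φ : E → ℝ}

def capMass (μ : Measure E) (K : Set E) (φ : E → ℝ) (v : E) (s : ℝ) : ℝ :=
  ∫ y in K ∩ {y | s ≤ ⟪v, y⟫}, φ y ∂μ

theorem capMass_of_forall_le {v : E} {s : ℝ} (hs : ∀ y ∈ K, s ≤ ⟪v, y⟫) :
    capMass μ K φ v s = ∫ y in K, φ y ∂μ := by
  rw [capMass, inter_eq_self_of_subset_left (show K ⊆ {y | s ≤ ⟪v, y⟫} from hs)]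

variable [BorelSpace E]

theorem measurableSet_le_inner (v : E) (s : ℝ) : MeasurableSet {y : E | s ≤ ⟪v, y⟫} :=
  (isClosed_le continuous_const (continuous_const.inner continuous_id)).measurableSet

theorem capMass_antitone (hK : MeasurableSet K) (hφ : IntegrableOn φ K μ)
    (hφ₀ : ∀ x ∈ K, 0 ≤ φ x) (v : E) : Antitone (capMass μ K φ v) := fun s _ hss' =>
  setIntegral_mono_set (hφ.mono_set inter_subset_left)
    ((ae_restrict_mem (hK.inter (measurableSet_le_inner v s))).mono fun y hy => hφ₀ y hy.1)
    (.of_forall fun _ hy => ⟨hy.1, hss'.trans hy.2⟩)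

theorem capMass_lt_capMass [μ.IsOpenPosMeasure] (hK : MeasurableSet K) (hKc : Convex ℝ K)
    (hKi : (interior K).Nonempty) (hφ : IntegrableOn φ K μ) (hφpos : ∀ x ∈ K, 0 < φ x)
    {v y₁ y₂ : E} {a b : ℝ} (hy₁ : y₁ ∈ K) (hy₂ : y₂ ∈ K) (ha : a < ⟪v, y₁⟫)
    (hb : ⟪v, y₂⟫ < b) (hab : a < b) : capMass μ K φ v b < capMass μ K φ v a := by
  have hcont : Continuous fun y : E => ⟪v, y⟫ := continuous_const.inner continuous_id
  have hsub : K ∩ {y | b ≤ ⟪v, y⟫} ⊆ K ∩ {y | a ≤ ⟪v, y⟫} := fun _ hy =>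
    ⟨hy.1, hab.le.trans hy.2⟩
  have hslab : 0 < ∫ y in (K ∩ {y | a ≤ ⟪v, y⟫}) \ (K ∩ {y | b ≤ ⟪v, y⟫}), φ y ∂μ := by
    obtain ⟨x, hx, hxv⟩ := hKc.exists_mem_interior_inner_mem_Ioo hKi hy₁ hy₂ ha hb hab
    refine setIntegral_pos_of_isOpen_subset
      ((hK.inter (measurableSet_le_inner v a)).diff (hK.inter (measurableSet_le_inner v b)))
      (hφ.mono_set (sdiff_subset.trans inter_subset_left)) (fun y hy => hφpos y hy.1.1)
      (isOpen_interior.inter (isOpen_Ioo.preimage hcont)) ⟨x, hx, hxv⟩ ?_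
    rintro y ⟨hyK, hay, hyb⟩
    exact ⟨⟨interior_subset hyK, hay.le⟩, fun h => (not_le.2 hyb) h.2⟩
  rw [setIntegral_sdiff (hK.inter (measurableSet_le_inner v b))
    (hφ.mono_set inter_subset_left) hsub] at hslab
  exact sub_pos.1 hslab

variable [FiniteDimensional ℝ E]

theorem addHaar_setOf_inner_eq (μ : Measure E) [μ.IsAddHaarMeasure] {v : E} (hv : v ≠ 0)
    (c : ℝ) : μ {y | ⟪v, y⟫ = c} = 0 := by
  let H : AffineSubspace ℝ E := (AffineSubspace.mk' c ⊥).comap (innerₛₗ ℝ v).toAffineMap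
  have hH : (H : Set E) = {y | ⟪v, y⟫ = c} := by
    ext y
    simp [H, sub_eq_zero]
  rw [← hH]
  refine Measure.addHaar_affineSubspace μ H fun htop => ?_
  have hmem : ((c + 1) / ⟪v, v⟫) • v ∈ (H : Set E) := by
    rw [htop]
    trivial
  rw [hH, mem_ofPred_eq, inner_smul_right, div_mul_cancel₀ _ (inner_self_ne_zero.2 hv)] at hmem
  linarith

theorem capMass_eq_zero [μ.IsAddHaarMeasure] {v : E} (hv : v ≠ 0) {s : ℝ}
    (hs : ∀ y ∈ K, ⟪v, y⟫ ≤ s) : capMass μ K φ v s = 0 := by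
  have hnull : μ (K ∩ {y | s ≤ ⟪v, y⟫}) = 0 :=
    measure_mono_null (fun y hy => le_antisymm (hs y hy.1) hy.2) (addHaar_setOf_inner_eq μ hv s)
  rw [capMass, Measure.restrict_eq_zero.2 hnull, integral_zero_measure]

theorem continuousAt_capMass [μ.IsAddHaarMeasure] (hφ : IntegrableOn φ K μ) {v : E}
    (hv : v ≠ 0) (s : ℝ) :
    ContinuousAt (fun p : E × ℝ => capMass μ K φ p.1 p.2) (v, s) := by
  simp only [capMass, ← setIntegral_indicator (measurableSet_le_inner _ _)]
  refine continuousAt_of_dominated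
    (.of_forall fun _ => hφ.aestronglyMeasurable.indicator (measurableSet_le_inner _ _))
    (.of_forall fun _ => .of_forall fun _ => norm_indicator_le_norm_self _ _) hφ.norm ?_
  have hoff : ∀ᵐ y ∂μ.restrict K, ⟪v, y⟫ ≠ s :=
    ae_restrict_of_ae (measure_eq_zero_iff_ae_notMem.1 (addHaar_setOf_inner_eq μ hv s))
  -- off the null hyperplane `⟪v, y⟫ = s` the integrand is locally constant in `(v, s)`
  filter_upwards [hoff] with y hy
  have hind : (fun p : E × ℝ => {y | p.2 ≤ ⟪p.1, y⟫}.indicator φ y)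
      = {p : E × ℝ | p.2 ≤ ⟪p.1, y⟫}.indicator (fun _ => φ y) := by
    ext p
    simp [indicator]
  rw [hind]
  exact continuousOn_const.continuousAt_indicator fun h =>
    hy (frontier_le_subset_eq continuous_snd (continuous_fst.inner continuous_const) h).symm

theorem isMassProfile_capMass [μ.IsAddHaarMeasure] (hK : IsCompact K) (hKc : Convex ℝ K)
    (hKi : (interior K).Nonempty) (hφc : ContinuousOn φ K) (hφpos : ∀ x ∈ K, 0 < φ x)
    {v : E} (hv : v ≠ 0) :
    IsMassProfile (capMass μ K φ v) (sInf ((fun x => ⟪v, x⟫) '' K))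
      (sSup ((fun x => ⟪v, x⟫) '' K)) (∫ x in K, φ x ∂μ) := by
  have hKm : MeasurableSet K := hK.isClosed.measurableSet
  have hφ : IntegrableOn φ K μ := hφc.integrableOn_compact hK
  have hKne : ((fun x => ⟪v, x⟫) '' K).Nonempty := (hKi.mono interior_subset).image _
  have himg : IsCompact ((fun x => ⟪v, x⟫) '' K) :=
    hK.image (continuous_const.inner continuous_id)
  refine ⟨continuous_iff_continuousAt.2 fun s =>
      (continuousAt_capMass hφ hv s).comp (continuous_const.prodMk continuous_id).continuousAt,
    capMass_antitone hKm hφ (fun x hx => (hφpos x hx).le) v, ?_, ?_, ?_⟩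
  · intro a ha b hb hab
    obtain ⟨_, ⟨y₁, hy₁, rfl⟩, h₁⟩ := exists_lt_of_lt_csSup hKne (hab.trans_le hb.2)
    obtain ⟨_, ⟨y₂, hy₂, rfl⟩, h₂⟩ := exists_lt_of_csInf_lt hKne (ha.1.trans_lt hab)
    exact capMass_lt_capMass hKm hKc hKi hφ hφpos hy₁ hy₂ h₁ h₂ hab
  · exact fun s hs => capMass_of_forall_le fun y hy =>
      hs.trans (csInf_le himg.bddBelow (mem_image_of_mem _ hy))
  · exact capMass_eq_zero hv fun y hy => le_csSup himg.bddAbove (mem_image_of_mem _ hy)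

end CapMass

/-- For a convex body `K` and continuous `φ > 0` on `K`, there are
`δ₀ > 0` and a cut-off function `t(δ, v)` with `Φ(K ∩ H⁺(v, t(δ,v))) = δ`, jointly
continuous on `[0, δ₀) × S^{n−1}`, with `t(0, v) = h_K(v)`, and the weighted floating
body satisfies `K_δ^φ = ⋂_{v ∈ S^{n−1}} H⁻(v, t(δ, v))` for `δ ∈ (0, δ₀)`. -/
theorem weighted_floating_body_cutoff_parametrization {n : ℕ} (K : Set (Euc n))
    (hKcomp : IsCompact K) (hKconv : Convex ℝ K) (hKint : (interior K).Nonempty)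
    (φ : Euc n → ℝ) (hφcont : ContinuousOn φ K) (hφpos : ∀ x ∈ K, 0 < φ x) :
    ∃ δ₀ > 0, ∃ t : ℝ × Euc n → ℝ,
      ContinuousOn t (Ico (0 : ℝ) δ₀ ×ˢ sphere (0 : Euc n) 1) ∧
      (∀ v ∈ sphere (0 : Euc n) 1, t (0, v) = suppFn K v) ∧
      (∀ δ ∈ Ioo (0 : ℝ) δ₀, ∀ v ∈ sphere (0 : Euc n) 1,
        (∫ y in K ∩ {y : Euc n | t (δ, v) ≤ ⟪v, y⟫}, φ y) = δ) ∧
      (∀ δ ∈ Ioo (0 : ℝ) δ₀,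
        wfloat K φ δ = ⋂ v ∈ sphere (0 : Euc n) 1, {y : Euc n | ⟪v, y⟫ ≤ t (δ, v)}) := by
  have hM : 0 < ∫ x in K, φ x := setIntegral_pos_of_isOpen_subset hKcomp.isClosed.measurableSet
    (hφcont.integrableOn_compact hKcomp) hφpos isOpen_interior hKint interior_subset
  have hprof : ∀ v ∈ sphere (0 : Euc n) 1, IsMassProfile (capMass volume K φ v)
      (sInf ((fun x => ⟪v, x⟫) '' K)) (suppFn K v) (∫ x in K, φ x) := fun v hv =>
    isMassProfile_capMass hKcomp hKconv hKint hφcont hφpos (ne_zero_of_mem_unit_sphere ⟨v, hv⟩)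
  refine ⟨_, hM, fun p => sInf {s | capMass volume K φ p.2 s ≤ p.1}, ?_,
    fun v hv => (hprof v hv).sInf_nonpos_eq hM,
    fun δ hδ v hv => (hprof v hv).apply_sInf hδ.1.le hδ.2, fun δ hδ => ?_⟩
  · refine continuousOn_sInf_sublevel (fun p hp => ?_) hprof
      (hKcomp.continuous_sSup (continuous_fst.inner continuous_snd)).continuousOn
    exact (continuousAt_capMass (hφcont.integrableOn_compact hKcomp)
      (ne_zero_of_mem_unit_sphere ⟨p.1, hp.1⟩) p.2).continuousWithinAt
  · exact iInter₂_congr fun v hv =>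
      ((hprof v hv).isLeast_sInf hδ.1.le hδ.2).biInter_setOf_le fun y => ⟪v, y⟫
end
end
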